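/- Let k ≥ 1 and t ≥ 2 be integers, let n ≥ max{12tk + 2k, 4tk^2}, and set N = 2n + t − 2. Suppose the edges of the complete graph K_N are colored red and blue so that there is no red copy of the star K_{1,n−1} and no blue copy of tF_k. Let A be the vertex set of a blue copy of (t−1)F_k and S = V(K_N) \ A. Let Z_1 and Z_2 be disjoint subsets of S such that for each i ∈ {1,2} the blue graph inside Z_i has at most 3(k−1) non-isolated vertices and maximum degree at most 2(k−1), and n − 2kt + k + 1 ≤ |Z_i| ≤ n + k − 2; let W = S \ (Z_1 ∪ Z_2). Then for each w ∈ W and each i ∈ {1,2}: if w has at least 4kt + 2k − 7 blue neighbors in Z_i, then w has at most k − 1 blue neighbors in Z_{3−i}. -/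

import Mathlib

open SimpleGraph

/-- `host.ContainsCopy G` means that `host` contains a (not necessarily induced) subgraph
isomorphic to `G`. -/
def SimpleGraph.ContainsCopy {β α : Type*} (host : SimpleGraph β) (G : SimpleGraph α) : Prop :=
  ∃ f : α → β, Function.Injective f ∧ ∀ ⦃a b : α⦄, G.Adj a b → host.Adj (f a) (f b)

/-- `ramseyProp G H N` means: for every red-blue coloring of the edges of the complete graph
on `N` vertices (given by its red graph `red`, the blue graph being the complement `redᶜ`),
there is a red copy of `G` or a blue copy of `H`. -/
def ramseyProp {α β : Type*} (G : SimpleGraph α) (H : SimpleGraph β) (N : ℕ) : Prop :=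
  ∀ red : SimpleGraph (Fin N), red.ContainsCopy G ∨ (redᶜ).ContainsCopy H

/-- The Ramsey number `r(G, H)`: the least `N` with the Ramsey property. -/
noncomputable def ramseyNumber {α β : Type*} (G : SimpleGraph α) (H : SimpleGraph β) : ℕ :=
  sInf {N | ramseyProp G H N}

/-- The fan `F_k = K_1 + k·K_2`: `k` triangles sharing exactly one common vertex (`none`). -/
def fan (k : ℕ) : SimpleGraph (Option (Fin k × Fin 2)) :=
  SimpleGraph.fromRel (fun x y => x = none ∨ ∃ i a b, x = some (i, a) ∧ y = some (i, b))

/-- `copies t G` is the disjoint union of `t` copies of `G`. -/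
def copies {α : Type*} (t : ℕ) (G : SimpleGraph α) : SimpleGraph (Fin t × α) where
  Adj x y := x.1 = y.1 ∧ G.Adj x.2 y.2
  symm := ⟨fun _ _ h => ⟨h.1.symm, h.2.symm⟩⟩
  loopless := ⟨fun x h => G.loopless.irrefl x.2 h.2⟩

/-- The blue graph inside `Z` (with blue graph `Rᶜ`) has at most `3(k−1)` non-isolated
vertices and maximum degree at most `2(k−1)`. -/
def blueAlmostIndependent {N : ℕ} (R : SimpleGraph (Fin N)) (k : ℕ) (Z : Set (Fin N)) : Prop :=
  ({v ∈ Z | ∃ w ∈ Z, (Rᶜ).Adj v w}).ncard ≤ 3 * (k - 1) ∧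
    ∀ v ∈ Z, (((Rᶜ).neighborSet v ∩ Z).ncard ≤ 2 * (k - 1))

/-!
Every vertex has red degree at most `n - 2`, hence blue degree at least `n + t - 1`. Suppose
`w ∈ W` had `k` blue neighbours `u` in `Z_j` while having many in `Z_i`. Each such `u` has at most
`2(k - 1)` blue neighbours in `Z_j` and at most `N - |Z_i| - |Z_j|` outside `Z_i ∪ Z_j`, so it has
so many blue neighbours in `Z_i` that it shares at least `k` of them with `w`. By Hall's theorem
the `k` vertices `u` can be matched to distinct common neighbours `v`, and the triangles `w u v`
form a blue `F_k` inside `S`, disjoint from `A`; together with the blue `(t - 1)F_k` on `A` this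
is a blue `tF_k`.
-/

namespace Set

variable {α : Type*} [Finite α]

lemma ncard_add_ncard_le_ncard_inter_add {s t Z : Set α} (hs : s ⊆ Z) (ht : t ⊆ Z) :
    s.ncard + t.ncard ≤ (s ∩ t).ncard + Z.ncard := by
  rw [← ncard_union_add_ncard_inter s t]
  have := ncard_le_ncard (union_subset hs ht)
  omega

lemma ncard_add_ncard_add_ncard_le (s : Set α) {X Y : Set α} (hXY : Disjoint X Y) :
    s.ncard + X.ncard + Y.ncard ≤ (s ∩ X).ncard + (s ∩ Y).ncard + Nat.card α := by
  have hcover : s ⊆ (s ∩ X) ∪ (s ∩ Y) ∪ (X ∪ Y)ᶜ := fun a ha => by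
    by_cases a ∈ X <;> by_cases a ∈ Y <;> simp_all
  have h₁ := ncard_le_ncard hcover
  have h₂ := ncard_union_le ((s ∩ X) ∪ (s ∩ Y)) (X ∪ Y)ᶜ
  have h₃ := ncard_union_le (s ∩ X) (s ∩ Y)
  have h₄ := ncard_compl_add_ncard (X ∪ Y)
  rw [ncard_union_eq hXY] at h₄
  omega

lemma exists_injective_forall_mem_of_card_le {ι : Type*} [Finite ι] (C : ι → Set α)
    (hC : ∀ i, Nat.card ι ≤ (C i).ncard) : ∃ g : ι → α, Function.Injective g ∧ ∀ i, g i ∈ C i := by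
  classical
  have := Fintype.ofFinite ι
  have := Fintype.ofFinite α
  obtain ⟨g, hg, hgC⟩ := (Finset.all_card_le_biUnion_card_iff_exists_injective
    fun i => (C i).toFinset).mp fun s => by
      rcases s.eq_empty_or_nonempty with rfl | ⟨i, hi⟩
      · simp
      · calc s.card ≤ Nat.card ι := by simpa using s.card_le_univ
          _ ≤ (C i).toFinset.card := by simpa [ncard_eq_toFinset_card'] using hC i
          _ ≤ _ := Finset.card_le_card (Finset.subset_biUnion_of_mem (fun i => (C i).toFinset) hi)
  exact ⟨g, hg, fun i => by simpa using hgC i⟩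

end Set

namespace SimpleGraph

variable {V : Type*} (G : SimpleGraph V)

lemma containsCopy_of_isContained {α : Type*} {H : SimpleGraph α} (h : H ⊑ G) :
    G.ContainsCopy H :=
  let ⟨f⟩ := h
  ⟨f, f.injective, fun _ _ hab => f.toHom.map_adj hab⟩

lemma ncard_neighborSet_add_ncard_compl_neighborSet [Finite V] (v : V) :
    (G.neighborSet v).ncard + (Gᶜ.neighborSet v).ncard + 1 = Nat.card V := by
  rw [← Set.ncard_union_eq (G.compl_neighborSet_disjoint v),
    G.neighborSet_union_compl_neighborSet_eq, ← Set.ncard_singleton v,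
    Set.ncard_compl_add_ncard]

lemma ncard_neighborSet_lt_of_not_containsCopy_star [Fintype V] {m : ℕ}
    (hG : ¬ G.ContainsCopy (completeBipartiteGraph (Fin 1) (Fin m))) (v : V) :
    (G.neighborSet v).ncard < m := by
  classical
  by_contra! h
  rw [Set.ncard_eq_toFinset_card'] at h
  obtain ⟨T, hT, hTcard⟩ := Finset.exists_subset_card_eq h
  refine hG (G.containsCopy_of_isContained (completeBipartiteGraph_isContained_iff.mpr
    ⟨{v}, T, by simp, by simpa using hTcard, ?_⟩))
  intro a ha b hb
  rw [Finset.coe_singleton, Set.mem_singleton_iff] at ha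
  subst ha
  simpa using hT hb

def fanMap {k : ℕ} (w : V) (x : Fin k → Fin 2 → V) : Option (Fin k × Fin 2) → V :=
  fun o => o.elim w fun p => x p.1 p.2

variable {G}

lemma fanMap_injective {k : ℕ} {w : V} {x : Fin k → Fin 2 → V}
    (hx : Function.Injective (Function.uncurry x)) (hw : ∀ i a, x i a ≠ w) :
    Function.Injective (fanMap w x) := by
  rintro (_ | ⟨i, a⟩) (_ | ⟨j, b⟩) h
  · rfl
  · exact (hw j b h.symm).elim
  · exact (hw i a h).elim
  · exact congrArg some (hx h)

lemma fanMap_adj {k : ℕ} {w : V} {x : Fin k → Fin 2 → V} (hcenter : ∀ i a, G.Adj w (x i a))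
    (hpair : ∀ i, G.Adj (x i 0) (x i 1)) ⦃o o' : Option (Fin k × Fin 2)⦄
    (h : (fan k).Adj o o') : G.Adj (fanMap w x o) (fanMap w x o') := by
  have hpair' : ∀ i a b, a ≠ b → G.Adj (x i a) (x i b) := fun i a b hab => by
    fin_cases a <;> fin_cases b <;> simp_all [G.adj_comm]
  have key : ∀ ⦃o o'⦄, o ≠ o' → (o = none ∨ ∃ i a b, o = some (i, a) ∧ o' = some (i, b)) →
      G.Adj (fanMap w x o) (fanMap w x o') := by
    rintro o o' hne (rfl | ⟨i, a, b, rfl, rfl⟩)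
    · obtain _ | ⟨i, a⟩ := o'
      · exact (hne rfl).elim
      · exact hcenter i a
    · exact hpair' i a b fun hab => hne (by rw [hab])
  simp only [fan, fromRel_adj] at h
  obtain ⟨hne, h | h⟩ := h
  · exact key hne h
  · exact (key hne.symm h).symm

lemma containsCopy_copies_succ {α : Type*} {H : SimpleGraph α} {s : ℕ} {f : Fin s × α → V}
    (hf_inj : Function.Injective f) (hf_adj : ∀ ⦃a b⦄, (copies s H).Adj a b → G.Adj (f a) (f b))
    {g : α → V} (hg_inj : Function.Injective g) (hg_adj : ∀ ⦃a b⦄, H.Adj a b → G.Adj (g a) (g b))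
    (hfg : ∀ a b, f a ≠ g b) : G.ContainsCopy (copies (s + 1) H) := by
  refine ⟨fun p => Fin.lastCases (g p.2) (fun i => f (i, p.2)) p.1, ?_, ?_⟩
  · rintro ⟨i, a⟩ ⟨j, b⟩ h
    cases i using Fin.lastCases <;> cases j using Fin.lastCases <;>
      simp only [Fin.lastCases_last, Fin.lastCases_castSucc] at h
    · rw [hg_inj h]
    · exact (hfg _ _ h.symm).elim
    · exact (hfg _ _ h).elim
    · cases hf_inj h; rfl
  · rintro ⟨i, a⟩ ⟨j, b⟩ ⟨hij, hab⟩
    dsimp only at hij hab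
    subst hij
    cases i using Fin.lastCases
    · simpa using hg_adj hab
    · simpa using hf_adj (a := (_, a)) (b := (_, b)) ⟨rfl, hab⟩

lemma exists_fan_of_common_neighbors [Finite V] {k : ℕ} {w : V} {X Y : Set V}
    (hXY : Disjoint X Y) (hwY : k ≤ (G.neighborSet w ∩ Y).ncard)
    (hcommon : ∀ u ∈ G.neighborSet w ∩ Y, k ≤ (G.neighborSet u ∩ G.neighborSet w ∩ X).ncard) :
    ∃ g : Option (Fin k × Fin 2) → V, Function.Injective g ∧
      (∀ ⦃a b⦄, (fan k).Adj a b → G.Adj (g a) (g b)) ∧ ∀ a, g a ∈ insert w (X ∪ Y) := by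
  obtain ⟨u, hu_inj, hu⟩ := Set.exists_injective_forall_mem_of_card_le
    (fun _ : Fin k => G.neighborSet w ∩ Y) fun _ => by simpa using hwY
  obtain ⟨v, hv_inj, hv⟩ := Set.exists_injective_forall_mem_of_card_le
    (fun i => G.neighborSet (u i) ∩ G.neighborSet w ∩ X) fun i => by simpa using hcommon _ (hu i)
  have hvu : ∀ i j, v i ≠ u j := fun i j => hXY.ne_of_mem (hv i).2 (hu j).2
  refine ⟨fanMap w fun i => ![u i, v i], fanMap_injective ?_ ?_, fanMap_adj ?_ ?_, ?_⟩
  · rintro ⟨i, a⟩ ⟨j, b⟩ h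
    fin_cases a <;> fin_cases b <;> simp at h
    · rw [hu_inj h]
    · exact (hvu j i h.symm).elim
    · exact (hvu i j h).elim
    · rw [hv_inj h]
  · intro i a
    fin_cases a
    · exact (G.ne_of_adj (hu i).1).symm
    · exact (G.ne_of_adj (hv i).1.2).symm
  · intro i a
    fin_cases a
    · exact (hu i).1
    · exact (hv i).1.2
  · exact fun i => (hv i).1.1
  · rintro (_ | ⟨i, a⟩)
    · exact Set.mem_insert w _
    · fin_cases a
      · exact Or.inr (Or.inr (hu i).2)
      · exact Or.inr (Or.inl (hv i).2)

lemma le_ncard_common_neighbors [Finite V] {k t n : ℕ} (hk : 1 ≤ k) (ht : 2 ≤ t)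
    (hcard : Nat.card V = 2 * n + t - 2) (hdeg : ∀ v, n + t - 1 ≤ (G.neighborSet v).ncard)
    {X Y : Set V} (hXY : Disjoint X Y)
    (hY_deg : ∀ v ∈ Y, (G.neighborSet v ∩ Y).ncard ≤ 2 * (k - 1))
    (hY : (n : ℤ) - 2 * k * t + k + 1 ≤ Y.ncard) {w : V}
    (hw : 4 * (k : ℤ) * t + 2 * k - 7 ≤ (G.neighborSet w ∩ X).ncard) {u : V} (hu : u ∈ Y) :
    k ≤ (G.neighborSet u ∩ G.neighborSet w ∩ X).ncard := by
  have hu_split := Set.ncard_add_ncard_add_ncard_le (G.neighborSet u) hXY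
  have hinter := Set.ncard_add_ncard_le_ncard_inter_add
    (Set.inter_subset_right (s := G.neighborSet u) (t := X))
    (Set.inter_subset_right (s := G.neighborSet w) (t := X))
  rw [← Set.inter_inter_distrib_right] at hinter
  have hu_deg := hdeg u
  have hu_Y := hY_deg u hu
  have hkt : (2 : ℤ) ≤ k * t := by
    have : (1 : ℤ) ≤ k := by exact_mod_cast hk
    have : (2 : ℤ) ≤ t := by exact_mod_cast ht
    nlinarith
  zify [hk, show 1 ≤ n + t by omega, show 2 ≤ 2 * n + t by omega] at *
  linarith

theorem ncard_neighborSet_inter_lt_of_not_containsCopy_copies_fan [Finite V] {k t n : ℕ}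
    (hk : 1 ≤ k) (ht : 2 ≤ t) (hcard : Nat.card V = 2 * n + t - 2)
    (hdeg : ∀ v, n + t - 1 ≤ (G.neighborSet v).ncard)
    (hG : ¬ G.ContainsCopy (copies t (fan k)))
    {f : Fin (t - 1) × Option (Fin k × Fin 2) → V} (hf_inj : Function.Injective f)
    (hf_adj : ∀ ⦃a b⦄, (copies (t - 1) (fan k)).Adj a b → G.Adj (f a) (f b))
    {S X Y : Set V} (hfS : ∀ a, f a ∉ S) (hXS : X ⊆ S) (hYS : Y ⊆ S) (hXY : Disjoint X Y)
    (hY_deg : ∀ v ∈ Y, (G.neighborSet v ∩ Y).ncard ≤ 2 * (k - 1))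
    (hY : (n : ℤ) - 2 * k * t + k + 1 ≤ Y.ncard) {w : V} (hwS : w ∈ S)
    (hw : 4 * (k : ℤ) * t + 2 * k - 7 ≤ (G.neighborSet w ∩ X).ncard) :
    (G.neighborSet w ∩ Y).ncard < k := by
  by_contra! hwY
  obtain ⟨g, hg_inj, hg_adj, hg⟩ := G.exists_fan_of_common_neighbors hXY hwY fun u hu =>
    G.le_ncard_common_neighbors hk ht hcard hdeg hXY hY_deg hY hw hu.2
  obtain ⟨s, rfl⟩ : ∃ s, t = s + 1 := ⟨t - 1, by omega⟩
  exact hG (containsCopy_copies_succ hf_inj hf_adj hg_inj hg_adj fun a b hab =>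
    hfS a (hab ▸ Set.insert_subset hwS (Set.union_subset hXS hYS) (hg b)))

end SimpleGraph

theorem W_blue_neighbors_general (k t n N : ℕ) (hk : 1 ≤ k) (ht : 2 ≤ t)
    (hN : N = 2 * n + t - 2)
    (R : SimpleGraph (Fin N))
    (hred : ¬ R.ContainsCopy (completeBipartiteGraph (Fin 1) (Fin (n - 1))))
    (hblue : ¬ (Rᶜ).ContainsCopy (copies t (fan k)))
    (f : Fin (t - 1) × Option (Fin k × Fin 2) → Fin N)
    (hf_inj : Function.Injective f)
    (hf_adj : ∀ ⦃a b⦄, (copies (t - 1) (fan k)).Adj a b → (Rᶜ).Adj (f a) (f b))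
    (A S : Set (Fin N)) (hA : A = Set.range f) (hS : S = Aᶜ)
    (Z₁ Z₂ : Set (Fin N)) (hZ₁S : Z₁ ⊆ S) (hZ₂S : Z₂ ⊆ S) (hdisj : Disjoint Z₁ Z₂)
    (hZ₁ : blueAlmostIndependent R k Z₁) (hZ₂ : blueAlmostIndependent R k Z₂)
    (hZ₁card : (n : ℤ) - 2 * (k : ℤ) * (t : ℤ) + (k : ℤ) + 1 ≤ (Z₁.ncard : ℤ) ∧
      (Z₁.ncard : ℤ) ≤ (n : ℤ) + (k : ℤ) - 2)
    (hZ₂card : (n : ℤ) - 2 * (k : ℤ) * (t : ℤ) + (k : ℤ) + 1 ≤ (Z₂.ncard : ℤ) ∧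
      (Z₂.ncard : ℤ) ≤ (n : ℤ) + (k : ℤ) - 2)
    (W : Set (Fin N)) (hW : W = S \ (Z₁ ∪ Z₂)) :
    ∀ w ∈ W,
      ((4 * (k : ℤ) * (t : ℤ) + 2 * (k : ℤ) - 7 ≤ (((Rᶜ).neighborSet w ∩ Z₁).ncard : ℤ) →
          ((Rᶜ).neighborSet w ∩ Z₂).ncard ≤ k - 1) ∧
        (4 * (k : ℤ) * (t : ℤ) + 2 * (k : ℤ) - 7 ≤ (((Rᶜ).neighborSet w ∩ Z₂).ncard : ℤ) →
          ((Rᶜ).neighborSet w ∩ Z₁).ncard ≤ k - 1)) := by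
  have hcard : Nat.card (Fin N) = 2 * n + t - 2 := by rw [Nat.card_fin, hN]
  have hdeg (v : Fin N) : n + t - 1 ≤ ((Rᶜ).neighborSet v).ncard := by
    have := R.ncard_neighborSet_add_ncard_compl_neighborSet v
    have := R.ncard_neighborSet_lt_of_not_containsCopy_star hred v
    omega
  have hfS (a) : f a ∉ S := by simp [hS, hA]
  rintro w hw
  have hwS : w ∈ S := (hW ▸ hw).1
  constructor
  · intro h
    have := ncard_neighborSet_inter_lt_of_not_containsCopy_copies_fan hk ht hcard hdeg hblue
      hf_inj hf_adj hfS hZ₁S hZ₂S hdisj hZ₂.2 hZ₂card.1 hwS h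
    omega
  · intro h
    have := ncard_neighborSet_inter_lt_of_not_containsCopy_copies_fan hk ht hcard hdeg hblue
      hf_inj hf_adj hfS hZ₂S hZ₁S hdisj.symm hZ₁.2 hZ₁card.1 hwS h
    omega

/-- Claim 3 in the proof of Theorem 6: for `w ∈ W = S \ (Z₁ ∪ Z₂)`, if `w` has at least
`4kt + 2k − 7` blue neighbors in `Zᵢ`, then it has at most `k − 1` blue neighbors in
`Z_{3−i}`. -/
theorem W_blue_neighbors (k t n N : ℕ) (hk : 1 ≤ k) (ht : 2 ≤ t)
    (hn1 : 12 * t * k + 2 * k ≤ n) (hn2 : 4 * t * k ^ 2 ≤ n)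
    (hN : N = 2 * n + t - 2)
    (R : SimpleGraph (Fin N))
    (hred : ¬ R.ContainsCopy (completeBipartiteGraph (Fin 1) (Fin (n - 1))))
    (hblue : ¬ (Rᶜ).ContainsCopy (copies t (fan k)))
    (f : Fin (t - 1) × Option (Fin k × Fin 2) → Fin N)
    (hf_inj : Function.Injective f)
    (hf_adj : ∀ ⦃a b⦄, (copies (t - 1) (fan k)).Adj a b → (Rᶜ).Adj (f a) (f b))
    (A S : Set (Fin N)) (hA : A = Set.range f) (hS : S = Aᶜ)
    (Z₁ Z₂ : Set (Fin N)) (hZ₁S : Z₁ ⊆ S) (hZ₂S : Z₂ ⊆ S) (hdisj : Disjoint Z₁ Z₂)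
    (hZ₁ : blueAlmostIndependent R k Z₁) (hZ₂ : blueAlmostIndependent R k Z₂)
    (hZ₁card : (n : ℤ) - 2 * (k : ℤ) * (t : ℤ) + (k : ℤ) + 1 ≤ (Z₁.ncard : ℤ) ∧
      (Z₁.ncard : ℤ) ≤ (n : ℤ) + (k : ℤ) - 2)
    (hZ₂card : (n : ℤ) - 2 * (k : ℤ) * (t : ℤ) + (k : ℤ) + 1 ≤ (Z₂.ncard : ℤ) ∧
      (Z₂.ncard : ℤ) ≤ (n : ℤ) + (k : ℤ) - 2)
    (W : Set (Fin N)) (hW : W = S \ (Z₁ ∪ Z₂)) :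
    ∀ w ∈ W,
      ((4 * (k : ℤ) * (t : ℤ) + 2 * (k : ℤ) - 7 ≤ (((Rᶜ).neighborSet w ∩ Z₁).ncard : ℤ) →
          ((Rᶜ).neighborSet w ∩ Z₂).ncard ≤ k - 1) ∧
        (4 * (k : ℤ) * (t : ℤ) + 2 * (k : ℤ) - 7 ≤ (((Rᶜ).neighborSet w ∩ Z₂).ncard : ℤ) →
          ((Rᶜ).neighborSet w ∩ Z₁).ncard ≤ k - 1)) :=
  W_blue_neighbors_general k t n N hk ht hN R hred hblue f hf_inj hf_adj A S hA hS Z₁ Z₂ hZ₁S hZ₂S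
    hdisj hZ₁ hZ₂ hZ₁card hZ₂card W hW
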